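/- A subsemimodule W ⊆ (ℝmax^n)^2 is a closed polar cone if, and only if, W = (W⋄)°. -/

import Mathlib

open scoped Classical

noncomputable section

/-- The max-plus semiring `ℝmax = ℝ ∪ {-∞}`. Its `Add` is the max-plus
"multiplication" `a ⊗ b = a + b` (with `-∞` absorbing), its `max` is the
max-plus "addition". -/
abbrev Rmax := WithBot ℝ

/-- The order topology on `WithBot ℝ` (the topology of the metric
`d(a,b) = |exp a - exp b|`). -/
instance : TopologicalSpace Rmax := Preorder.topology Rmax
instance : OrderTopology Rmax := ⟨rfl⟩

/-- Vectors of the max-plus semimodule `ℝmax^n`. -/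
abbrev RmaxVec (n : ℕ) := Fin n → Rmax

/-- The max-plus linear combination `xλ ⊕ yμ`. -/
def maxComb {n : ℕ} (x y : RmaxVec n) (lam mu : Rmax) : RmaxVec n :=
  fun i => max (x i + lam) (y i + mu)

/-- `V ⊆ ℝmax^n` is a (max-plus) subsemimodule. -/
def IsSubsemimodule {n : ℕ} (V : Set (RmaxVec n)) : Prop :=
  ∀ x ∈ V, ∀ y ∈ V, ∀ lam mu : Rmax, maxComb x y lam mu ∈ V

/-- `W ⊆ (ℝmax^n)² ≅ ℝmax^{2n}` is a (max-plus) subsemimodule,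
with the entrywise operations. -/
def IsSubsemimodulePair {n : ℕ} (W : Set (RmaxVec n × RmaxVec n)) : Prop :=
  ∀ p ∈ W, ∀ q ∈ W, ∀ lam mu : Rmax,
    (maxComb p.1 q.1 lam mu, maxComb p.2 q.2 lam mu) ∈ W

/-- A pre-congruence: a subsemimodule of `(ℝmax^n)²` containing the diagonal
and transitive. -/
def IsPrecongruence {n : ℕ} (W : Set (RmaxVec n × RmaxVec n)) : Prop :=
  IsSubsemimodulePair W ∧ (∀ f : RmaxVec n, (f, f) ∈ W) ∧
    ∀ f g h : RmaxVec n, (f, g) ∈ W → (g, h) ∈ W → (f, h) ∈ W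

/-- A polar cone: a pre-congruence such that `f ≤ g` implies `(f,g) ∈ W`. -/
def IsPolarCone {n : ℕ} (W : Set (RmaxVec n × RmaxVec n)) : Prop :=
  IsPrecongruence W ∧ ∀ f g : RmaxVec n, f ≤ g → (f, g) ∈ W

/-- A congruence: a symmetric pre-congruence. -/
def IsCongruence {n : ℕ} (W : Set (RmaxVec n × RmaxVec n)) : Prop :=
  IsPrecongruence W ∧ ∀ f g : RmaxVec n, (f, g) ∈ W → (g, f) ∈ W

/-- The max-plus bracket `⟨y, x⟩ = max_i (y_i + x_i)`. -/
def mpBracket {n : ℕ} (y x : RmaxVec n) : Rmax :=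
  Finset.univ.sup fun i => y i + x i

/-- The polar `V°` of `V ⊆ ℝmax^n`. -/
def mpPolar {n : ℕ} (V : Set (RmaxVec n)) : Set (RmaxVec n × RmaxVec n) :=
  { p | ∀ x ∈ V, mpBracket p.1 x ≤ mpBracket p.2 x }

/-- The orthogonal `V⊥` of `V ⊆ ℝmax^n`. -/
def mpOrtho {n : ℕ} (V : Set (RmaxVec n)) : Set (RmaxVec n × RmaxVec n) :=
  { p | ∀ x ∈ V, mpBracket p.1 x = mpBracket p.2 x }

/-- The dual polar `W⋄` of `W ⊆ (ℝmax^n)²`. -/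
def mpDiamond {n : ℕ} (W : Set (RmaxVec n × RmaxVec n)) : Set (RmaxVec n) :=
  { x | ∀ p ∈ W, mpBracket p.1 x ≤ mpBracket p.2 x }

/-- The dual orthogonal `W⊤` of `W ⊆ (ℝmax^n)²`. -/
def mpTop {n : ℕ} (W : Set (RmaxVec n × RmaxVec n)) : Set (RmaxVec n) :=
  { x | ∀ p ∈ W, mpBracket p.1 x = mpBracket p.2 x }

/-! `(W⋄)°` is closed because brackets are continuous, and a polar cone because brackets are
max-plus linear. Conversely, a pair `(f, g) ∉ W` is separated by an element of `W⋄`. By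
closedness, `g` may be replaced by `w = g ⊕ c` with finite entries while keeping `(f, w) ∉ W`.
The set `{u | (u, w) ∈ W}` is downward closed and closed under `⊕`, so it is determined by its
sections along the unit vectors; each is a closed lower subset of `ℝmax` containing `c`, hence of
the form `{t | t + y_j ≤ 0}`. The resulting `y` satisfies `(u, w) ∈ W ↔ ⟨u, y⟩ ≤ 0`; scaling and
transitivity put it in `W⋄`, while `⟨g, y⟩ ≤ ⟨w, y⟩ ≤ 0 < ⟨f, y⟩`. -/

open Function Filter Topology

namespace Rmax

lemma add_coe_neg_le_zero_iff (t : Rmax) (x : ℝ) : t + ((-x : ℝ) : Rmax) ≤ 0 ↔ t ≤ x := by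
  induction t using WithBot.recBotCoe with
  | bot => simp
  | coe s =>
    rw [← WithBot.coe_add, ← WithBot.coe_zero, WithBot.coe_le_coe, WithBot.coe_le_coe]
    constructor <;> intro h <;> linarith

lemma le_of_forall_add_le_zero {a b : Rmax} (h : ∀ l : ℝ, b + l ≤ 0 → a + l ≤ 0) : a ≤ b := by
  induction b using WithBot.recBotCoe with
  | bot =>
    induction a using WithBot.recBotCoe with
    | bot => exact le_rfl
    | coe x =>
      have := h (1 - x) (by simp)
      rw [← WithBot.coe_add, ← WithBot.coe_zero, WithBot.coe_le_coe] at this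
      linarith
  | coe x => simpa [add_coe_neg_le_zero_iff] using h (-x)

lemma tendsto_coe_atBot : Tendsto ((↑) : ℝ → Rmax) atBot (𝓝 ⊥) := by
  refine tendsto_order.2 ⟨fun a ha => absurd ha not_lt_bot, fun a ha => ?_⟩
  obtain ⟨r, rfl⟩ := WithBot.ne_bot_iff_exists.1 ha.ne'
  filter_upwards [eventually_lt_atBot r] with x hx
  exact WithBot.coe_lt_coe.2 hx

lemma continuous_add_const (c : Rmax) : Continuous (· + c) := by
  induction c using WithBot.recBotCoe with
  | bot => simpa only [WithBot.add_bot] using continuous_const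
  | coe r =>
    have : (· + (r : Rmax)) = OrderIso.withBotCongr (OrderIso.addRight r) := by
      funext a
      induction a using WithBot.recBotCoe <;> rfl
    rw [this]
    exact OrderIso.continuous _

lemma finset_sup_add {ι : Type*} (s : Finset ι) (f : ι → Rmax) (c : Rmax) :
    s.sup f + c = s.sup fun i => f i + c :=
  Finset.apply_sup_eq_sup_comp_of_linearOrder (· + c) (fun _ _ h => add_le_add_left h c)
    (WithBot.bot_add c)

lemma exists_forall_mem_iff_add_le_zero {T : Set Rmax} (hT : IsClosed T) (hlow : IsLowerSet T)
    {c : ℝ} (hc : (c : Rmax) ∈ T) : ∃ y : Rmax, ∀ t, t ∈ T ↔ t + y ≤ 0 := by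
  by_cases hall : ∀ x : ℝ, (x : Rmax) ∈ T
  · refine ⟨⊥, fun t => ?_⟩
    induction t using WithBot.recBotCoe with
    | bot => simpa using hlow bot_le hc
    | coe x => simpa using hall x
  · obtain ⟨M, hM⟩ := not_forall.1 hall
    set R := ((↑) : ℝ → Rmax) ⁻¹' T
    have hbdd : BddAbove R :=
      ⟨M, fun x hx => le_of_not_gt fun hMx => hM (hlow (WithBot.coe_le_coe.2 hMx.le) hx)⟩
    have hsup : sSup R ∈ R := (hT.preimage WithBot.continuous_coe).csSup_mem ⟨c, hc⟩ hbdd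
    refine ⟨((-sSup R : ℝ) : Rmax), fun t => ?_⟩
    rw [add_coe_neg_le_zero_iff]
    refine ⟨fun ht => ?_, fun ht => hlow ht hsup⟩
    induction t using WithBot.recBotCoe with
    | bot => exact bot_le
    | coe x => exact WithBot.coe_le_coe.2 (le_csSup hbdd ht)

end Rmax

section Bracket

variable {n : ℕ}

lemma maxComb_zero_zero (x y : RmaxVec n) : maxComb x y 0 0 = x ⊔ y := by
  ext i
  simp [maxComb]

lemma mpBracket_le_iff {y x : RmaxVec n} {c : Rmax} :
    mpBracket y x ≤ c ↔ ∀ i, y i + x i ≤ c := by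
  simp [mpBracket, Finset.sup_le_iff]

lemma mpBracket_mono_left {u v : RmaxVec n} (x : RmaxVec n) (h : u ≤ v) :
    mpBracket u x ≤ mpBracket v x :=
  Finset.sup_mono_fun fun i _ => add_le_add_left (h i) _

lemma continuous_mpBracket_left (x : RmaxVec n) :
    Continuous fun u : RmaxVec n => mpBracket u x :=
  Continuous.finset_sup_apply fun i _ =>
    (Rmax.continuous_add_const (x i)).comp (continuous_apply i)

lemma mpBracket_maxComb (u v x : RmaxVec n) (lam mu : Rmax) :
    mpBracket (maxComb u v lam mu) x = max (mpBracket u x + lam) (mpBracket v x + mu) := by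
  unfold mpBracket
  rw [Rmax.finset_sup_add, Rmax.finset_sup_add, ← Finset.sup_sup]
  refine Finset.sup_congr rfl fun i _ => ?_
  simp only [maxComb, Pi.sup_apply, max_add_add_right, add_right_comm]

end Bracket

section PolarCone

variable {n : ℕ}

lemma isClosed_mpPolar (V : Set (RmaxVec n)) : IsClosed (mpPolar V) := by
  simp only [mpPolar, Set.ofPred_forall]
  exact isClosed_biInter fun x _ => isClosed_le
    ((continuous_mpBracket_left x).comp continuous_fst)
    ((continuous_mpBracket_left x).comp continuous_snd)

lemma isPolarCone_mpPolar (V : Set (RmaxVec n)) : IsPolarCone (mpPolar V) := by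
  refine ⟨⟨fun p hp q hq lam mu x hx => ?_, fun f x _ => le_rfl,
    fun f g h hfg hgh x hx => (hfg x hx).trans (hgh x hx)⟩,
    fun f g hfg x _ => mpBracket_mono_left x hfg⟩
  rw [mpBracket_maxComb, mpBracket_maxComb]
  exact max_le_max (add_le_add_left (hp x hx) _) (add_le_add_left (hq x hx) _)

lemma IsPrecongruence.mem_mpDiamond {W : Set (RmaxVec n × RmaxVec n)} (hW : IsPrecongruence W)
    {w y : RmaxVec n} (hy : ∀ u, (u, w) ∈ W ↔ mpBracket u y ≤ 0) : y ∈ mpDiamond W := by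
  rintro ⟨u, v⟩ huv
  refine Rmax.le_of_forall_add_le_zero fun l hl => ?_
  have hvl : (maxComb v v l l, w) ∈ W := (hy _).2 (by rwa [mpBracket_maxComb, max_self])
  have hul : (maxComb u u l l, w) ∈ W := hW.2.2 _ _ _ (hW.1 _ huv _ huv l l) hvl
  simpa only [mpBracket_maxComb, max_self] using (hy _).1 hul

variable {W : Set (RmaxVec n × RmaxVec n)}

lemma IsPolarCone.mem_iff_forall_update (hW : IsPolarCone W) {u w : RmaxVec n} :
    (u, w) ∈ W ↔ ∀ j, (update ⊥ j (u j), w) ∈ W := by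
  obtain ⟨⟨hsub, -, htrans⟩, hle⟩ := hW
  refine ⟨fun h j => htrans _ _ _ (hle _ _ (update_le_iff.2 ⟨le_rfl, fun _ _ => bot_le⟩)) h,
    fun h => ?_⟩
  have hu : u = Finset.univ.sup fun j => update ⊥ j (u j) := by
    refine le_antisymm (fun i => ?_)
      (Finset.sup_le fun j _ => update_le_iff.2 ⟨le_rfl, fun _ _ => bot_le⟩)
    simpa using Finset.le_sup (f := fun j => update ⊥ j (u j)) (Finset.mem_univ i) i
  have hsup (a b : RmaxVec n) (ha : (a, w) ∈ W) (hb : (b, w) ∈ W) : (a ⊔ b, w) ∈ W := by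
    simpa only [maxComb_zero_zero, sup_idem] using hsub _ ha _ hb 0 0
  rw [hu]
  exact Finset.sup_mem {a | (a, w) ∈ W} (hle _ _ bot_le) (fun a ha b hb => hsup a b ha hb)
    _ _ fun j _ => h j

lemma IsPolarCone.exists_forall_mem_iff_mpBracket_le_zero (hW : IsPolarCone W)
    (hcl : IsClosed W) {w : RmaxVec n} {c : ℝ} (hc : ∀ j, (c : Rmax) ≤ w j) :
    ∃ y : RmaxVec n, ∀ u, (u, w) ∈ W ↔ mpBracket u y ≤ 0 := by
  have hT : ∀ j, ∃ yj : Rmax, ∀ t, (update ⊥ j t, w) ∈ W ↔ t + yj ≤ 0 := fun j =>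
    Rmax.exists_forall_mem_iff_add_le_zero
      (hcl.preimage ((continuous_const.update j continuous_id).prodMk continuous_const))
      (fun s t hts hs => hW.1.2.2 _ _ _ (hW.2 _ _ (update_le_update_iff'.2 hts)) hs)
      (hW.2 _ _ (update_le_iff.2 ⟨hc j, fun _ _ => bot_le⟩))
  choose y hy using hT
  refine ⟨y, fun u => ?_⟩
  rw [hW.mem_iff_forall_update, mpBracket_le_iff]
  simp only [hy]

lemma IsClosed.exists_notMem_sup_const (hcl : IsClosed W) {f g : RmaxVec n} (hfg : (f, g) ∉ W) :
    ∃ c : ℝ, (f, g ⊔ fun _ => (c : Rmax)) ∉ W := by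
  by_contra! h
  have hS : IsClosed {t : Rmax | (f, g ⊔ fun _ => t) ∈ W} :=
    hcl.preimage <| continuous_const.prodMk <|
      continuous_pi fun _ => continuous_const.max continuous_id
  have hbot := hS.mem_of_tendsto Rmax.tendsto_coe_atBot (Eventually.of_forall h)
  exact hfg (by simpa only [Set.mem_ofPred_eq, ← Pi.bot_def, sup_bot_eq] using hbot)

lemma IsPolarCone.exists_mem_mpDiamond_lt (hW : IsPolarCone W) (hcl : IsClosed W)
    {f g : RmaxVec n} (hfg : (f, g) ∉ W) :
    ∃ y ∈ mpDiamond W, mpBracket g y < mpBracket f y := by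
  obtain ⟨c, hc⟩ := hcl.exists_notMem_sup_const hfg
  set w := g ⊔ fun _ => (c : Rmax)
  obtain ⟨y, hy⟩ :=
    hW.exists_forall_mem_iff_mpBracket_le_zero hcl (w := w) fun _ => le_sup_right
  refine ⟨y, hW.1.mem_mpDiamond hy, ?_⟩
  calc mpBracket g y ≤ mpBracket w y := mpBracket_mono_left y le_sup_left
    _ ≤ 0 := (hy w).1 (hW.1.2.1 w)
    _ < mpBracket f y := not_le.1 fun h => hc ((hy f).2 h)

end PolarCone

theorem closed_polar_cone_iff_bipolar_general (n : ℕ) (W : Set (RmaxVec n × RmaxVec n)) :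
    (IsClosed W ∧ IsPolarCone W) ↔ W = mpPolar (mpDiamond W) := by
  refine ⟨fun ⟨hcl, hW⟩ => ?_, fun h => h ▸ ⟨isClosed_mpPolar _, isPolarCone_mpPolar _⟩⟩
  refine Set.Subset.antisymm (fun p hp x hx => hx p hp) fun ⟨f, g⟩ hbipolar => ?_
  by_contra hfg
  obtain ⟨y, hy, hlt⟩ := hW.exists_mem_mpDiamond_lt hcl hfg
  exact hlt.not_ge (hbipolar y hy)

/-- Theorem 4.6 of the paper, polar-cone part: a subsemimodule
`W ⊆ (ℝmax^n)²` is a closed polar cone if, and only if, `W = (W⋄)°`. -/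
theorem closed_polar_cone_iff_bipolar (n : ℕ) (W : Set (RmaxVec n × RmaxVec n))
    (hW : IsSubsemimodulePair W) :
    (IsClosed W ∧ IsPolarCone W) ↔ W = mpPolar (mpDiamond W) :=
  closed_polar_cone_iff_bipolar_general n W
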